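/- Let H be a real separable Hilbert space with orthonormal basis (e_j)_{j ∈ ℕ}, M ≥ 0 and (ε_j)_{j ∈ ℕ} a summable sequence of nonnegative reals. Let F : H × H → ℂ be bounded and continuous, and suppose that for every multi-index (α, β) with finite support and α_j ≤ 2, β_j ≤ 2 for all j, the iterated directional (line) derivative ∂_x^α ∂_ξ^β F (taken along the directions (e_j, 0) with multiplicity α_j and (0, e_j) with multiplicity β_j) exists, is continuous on H × H, and satisfies |∂_x^α ∂_ξ^β F(x, ξ)| ≤ M ∏_j ε_j^{α_j + β_j}. For m ≥ 1 and t > 0 define the partial heat operator (H_{m,t} F)(x, ξ) = ∫_{ℝ^m × ℝ^m} F( x + Σ_{j<m} y_j e_j , ξ + Σ_{j<m} η_j e_j ) dγ_t^{2m}(y, η). Then for every (x, ξ) ∈ H × H, every m ≥ 1 and every t ∈ (0, 1), | (H_{m,t} F)(x, ξ) − F(x, ξ) | ≤ 2 M t Σ_{j<m} ε_j² + 4 M Σ_{j ≥ m} ε_j. -/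

import Mathlib

/-!
In one variable, write `g y = g 0 + y g'(0) + r y` with `|r y| ≤ y² sup |g''|` (Taylor). The linear
term has mean zero under `γ_t`, so `|∫ g dγ_t - g 0| ≤ t sup |g''|`. Integrating out the Gaussian
coordinates one at a time (Fubini) and applying this along each direction `(e_j, 0)`, `(0, e_j)`,
where `|∂² F| ≤ M ε_j²`, the errors add up to at most `2 M t Σ_{j<m} ε_j²`.
-/

open MeasureTheory ProbabilityTheory

/-- The Gaussian product measure on `ℝ^m` with mean `0` and variance `t` in each coordinate. -/
noncomputable def gaussRn (m : ℕ) (t : ℝ) : Measure (Fin m → ℝ) :=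
  Measure.pi fun _ => gaussianReal 0 t.toNNReal

open scoped NNReal

instance (m : ℕ) (t : ℝ) : IsProbabilityMeasure (gaussRn m t) := by
  unfold gaussRn; infer_instance

section HeatError

variable {E : Type*} [NormedAddCommGroup E] [NormedSpace ℝ E]
  {V : Type*} [NormedAddCommGroup V] [NormedSpace ℝ V]

lemma integral_sq_gaussianReal (v : ℝ≥0) : ∫ x, x ^ 2 ∂gaussianReal 0 v = v := by
  rw [← variance_of_integral_eq_zero aemeasurable_id' integral_id_gaussianReal,
    variance_fun_id_gaussianReal]

lemma integrable_sq_gaussianReal (v : ℝ≥0) : Integrable (fun x : ℝ ↦ x ^ 2) (gaussianReal 0 v) :=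
  (memLp_id_gaussianReal 2).integrable_sq

lemma HasLineDerivAt.hasDerivAt_add_smul {f : V → E} {f' : E} {x v : V} {a : ℝ}
    (h : HasLineDerivAt ℝ f f' (x + a • v) v) : HasDerivAt (fun s : ℝ ↦ f (x + s • v)) f' a := by
  have h' : HasDerivAt (fun s : ℝ ↦ f (x + a • v + s • v)) f' (a - a) := by rwa [sub_self]
  convert h'.comp_sub_const a a using 2 with s
  rw [add_assoc, ← add_smul, add_sub_cancel]

lemma norm_sub_sub_smul_le_of_hasDerivAt {g g' g'' : ℝ → E} {c : ℝ}
    (hg : ∀ s, HasDerivAt g (g' s) s) (hg' : ∀ s, HasDerivAt g' (g'' s) s)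
    (hg'' : ∀ s, ‖g'' s‖ ≤ c) (y : ℝ) : ‖g y - g 0 - y • g' 0‖ ≤ c * y ^ 2 := by
  have hc : 0 ≤ c := (norm_nonneg _).trans (hg'' 0)
  have hg'_lip : ∀ s, ‖g' s - g' 0‖ ≤ c * |s| := fun s ↦ by
    simpa using convex_univ.norm_image_sub_le_of_norm_hasDerivWithin_le
      (fun s _ ↦ (hg' s).hasDerivWithinAt) (fun s _ ↦ hg'' s) (Set.mem_univ 0) (Set.mem_univ s)
  have hrem : ∀ s, HasDerivAt (fun s ↦ g s - s • g' 0) (g' s - g' 0) s := fun s ↦ by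
    simpa using (hg s).fun_sub ((hasDerivAt_id s).smul_const (g' 0))
  have key := (convex_uIcc 0 y).norm_image_sub_le_of_norm_hasDerivWithin_le
    (fun s _ ↦ (hrem s).hasDerivWithinAt) (C := c * |y|)
    (fun s hs ↦ (hg'_lip s).trans <|
      mul_le_mul_of_nonneg_left (by simpa using Set.abs_sub_left_of_mem_uIcc hs) hc)
    Set.left_mem_uIcc Set.right_mem_uIcc
  calc ‖g y - g 0 - y • g' 0‖ = ‖(g y - y • g' 0) - (g 0 - (0 : ℝ) • g' 0)‖ := by
        rw [zero_smul, sub_zero, sub_right_comm]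
    _ ≤ c * |y| * ‖y - 0‖ := key
    _ = c * y ^ 2 := by rw [sub_zero, Real.norm_eq_abs, mul_assoc, ← sq, sq_abs]

theorem norm_integral_gaussianReal_sub_le [CompleteSpace E] {g g' g'' : ℝ → E} {c : ℝ}
    (hg : ∀ s, HasDerivAt g (g' s) s) (hg' : ∀ s, HasDerivAt g' (g'' s) s)
    (hg'' : ∀ s, ‖g'' s‖ ≤ c) (v : ℝ≥0) :
    ‖∫ y, g y ∂gaussianReal 0 v - g 0‖ ≤ c * v := by
  set r : ℝ → E := fun y ↦ g y - g 0 - y • g' 0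
  have hr_le := norm_sub_sub_smul_le_of_hasDerivAt hg hg' hg''
  have hr_int : Integrable r (gaussianReal 0 v) := by
    refine ((integrable_sq_gaussianReal v).const_mul c).mono' ?_ (.of_forall hr_le)
    have hg_cont : Continuous g := continuous_iff_continuousAt.2 fun s ↦ (hg s).continuousAt
    exact (by fun_prop : Continuous r).aestronglyMeasurable
  have hlin_int : Integrable (fun y : ℝ ↦ y • g' 0) (gaussianReal 0 v) :=
    ((memLp_id_gaussianReal 1).integrable le_rfl).smul_const _
  have hg_int : Integrable g (gaussianReal 0 v) := by
    refine ((hr_int.add (integrable_const (g 0))).add hlin_int).congr (.of_forall fun y ↦ ?_)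
    simp only [r, Pi.add_apply]
    abel
  have hr_integral : ∫ y, r y ∂gaussianReal 0 v = ∫ y, g y ∂gaussianReal 0 v - g 0 := by
    change ∫ y, (g y - g 0 - y • g' 0) ∂gaussianReal 0 v = _
    rw [integral_sub (f := fun y ↦ g y - g 0) (hg_int.sub (integrable_const _)) hlin_int,
      integral_sub hg_int (integrable_const _), integral_smul_const, integral_id_gaussianReal]
    simp
  calc ‖∫ y, g y ∂gaussianReal 0 v - g 0‖ = ‖∫ y, r y ∂gaussianReal 0 v‖ := by rw [hr_integral]
    _ ≤ ∫ y, c * y ^ 2 ∂gaussianReal 0 v :=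
      norm_integral_le_of_norm_le ((integrable_sq_gaussianReal v).const_mul c) (.of_forall hr_le)
    _ = c * v := by rw [integral_const_mul, integral_sq_gaussianReal]

lemma norm_integral_sub_le_of_norm_sub_le {α : Type*} [MeasurableSpace α] {μ : Measure α}
    [IsProbabilityMeasure μ] {f g : α → E} {z : E} {A B : ℝ} (hf : Integrable f μ)
    (hg : Integrable g μ) (hfg : ∀ a, ‖f a - g a‖ ≤ A) (hgz : ‖∫ a, g a ∂μ - z‖ ≤ B) :
    ‖∫ a, f a ∂μ - z‖ ≤ A + B := by
  have hfg_int : ‖∫ a, (f a - g a) ∂μ‖ ≤ A := by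
    simpa using norm_integral_le_of_norm_le_const (μ := μ) (.of_forall hfg)
  calc ‖∫ a, f a ∂μ - z‖ = ‖∫ a, (f a - g a) ∂μ + (∫ a, g a ∂μ - z)‖ := by
        rw [integral_sub hf hg, sub_add_sub_cancel]
    _ ≤ A + B := (norm_add_le _ _).trans (add_le_add hfg_int hgz)

lemma integral_gaussRn_succ (n : ℕ) (t : ℝ) (f : (Fin (n + 1) → ℝ) → E) :
    ∫ y, f y ∂gaussRn (n + 1) t
      = ∫ z, f (Fin.snoc z.2 z.1) ∂(gaussianReal 0 t.toNNReal).prod (gaussRn n t) := by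
  simp only [gaussRn]
  rw [← ((measurePreserving_piFinSuccAbove _ (Fin.last n)).symm).integral_comp']
  simp [Fin.insertNthEquiv, Fin.insertNth_last']

def SecondLineDerivBoundedBy (Φ : V → E) (v : V) (c : ℝ) : Prop :=
  ∃ Φ' Φ'' : V → E, (∀ P, HasLineDerivAt ℝ Φ (Φ' P) P v) ∧
    (∀ P, HasLineDerivAt ℝ Φ' (Φ'' P) P v) ∧ ∀ P, ‖Φ'' P‖ ≤ c

variable [CompleteSpace E] {Φ : V → E}

lemma SecondLineDerivBoundedBy.norm_integral_gaussianReal_sub_le {v : V} {c : ℝ}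
    (h : SecondLineDerivBoundedBy Φ v c) (P : V) (τ : ℝ≥0) :
    ‖∫ a, Φ (P + a • v) ∂gaussianReal 0 τ - Φ P‖ ≤ c * τ := by
  obtain ⟨Φ', Φ'', hΦ', hΦ'', hbound⟩ := h
  simpa using _root_.norm_integral_gaussianReal_sub_le (fun a ↦ (hΦ' _).hasDerivAt_add_smul)
    (fun a ↦ (hΦ'' (P + a • v)).hasDerivAt_add_smul) (fun a ↦ hbound (P + a • v)) τ

theorem norm_integral_gaussRn_sub_le (hΦ : Continuous Φ) {B : ℝ} (hB : ∀ P, ‖Φ P‖ ≤ B)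
    {v : ℕ → V} {c : ℕ → ℝ} (hv : ∀ j, SecondLineDerivBoundedBy Φ (v j) (c j))
    {t : ℝ} (ht : 0 ≤ t) (n : ℕ) (P : V) :
    ‖∫ y, Φ (P + ∑ j : Fin n, y j • v j) ∂gaussRn n t - Φ P‖
      ≤ t * ∑ j ∈ Finset.range n, c j := by
  induction n generalizing P with
  | zero => simp
  | succ n ih =>
    have hsnoc : ∀ z : ℝ × (Fin n → ℝ),
        P + ∑ j, (Fin.snoc z.2 z.1 : Fin (n + 1) → ℝ) j • v j
          = P + z.1 • v n + ∑ j : Fin n, z.2 j • v j := fun z ↦ by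
      rw [Fin.sum_univ_castSucc]
      simp only [Fin.snoc_castSucc, Fin.snoc_last, Fin.val_castSucc, Fin.val_last]
      abel
    have hint : Integrable (fun z : ℝ × (Fin n → ℝ) ↦ Φ (P + z.1 • v n + ∑ j : Fin n, z.2 j • v j))
        ((gaussianReal 0 t.toNNReal).prod (gaussRn n t)) :=
      .of_bound (by fun_prop : Continuous _).aestronglyMeasurable B (.of_forall fun _ ↦ hB _)
    rw [integral_gaussRn_succ]
    simp_rw [hsnoc]
    rw [integral_prod _ hint, Finset.sum_range_succ, mul_add]
    refine norm_integral_sub_le_of_norm_sub_le hint.integral_prod_left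
      (.of_bound (by fun_prop : Continuous _).aestronglyMeasurable B (.of_forall fun _ ↦ hB _))
      (fun a ↦ ih (P + a • v n)) ?_
    simpa [Real.coe_toNNReal _ ht, mul_comm] using
      (hv n).norm_integral_gaussianReal_sub_le P t.toNNReal

theorem norm_integral_gaussRn_prod_sub_le (hΦ : Continuous Φ) {B : ℝ} (hB : ∀ P, ‖Φ P‖ ≤ B)
    {v w : ℕ → V} {c d : ℕ → ℝ} (hv : ∀ j, SecondLineDerivBoundedBy Φ (v j) (c j))
    (hw : ∀ j, SecondLineDerivBoundedBy Φ (w j) (d j)) {t : ℝ} (ht : 0 ≤ t) (n : ℕ) (P : V) :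
    ‖∫ p : (Fin n → ℝ) × (Fin n → ℝ),
        Φ (P + ∑ j : Fin n, p.1 j • v j + ∑ j : Fin n, p.2 j • w j)
        ∂(gaussRn n t).prod (gaussRn n t) - Φ P‖
      ≤ t * ∑ j ∈ Finset.range n, c j + t * ∑ j ∈ Finset.range n, d j := by
  have hint : Integrable (fun p : (Fin n → ℝ) × (Fin n → ℝ) ↦
        Φ (P + ∑ j : Fin n, p.1 j • v j + ∑ j : Fin n, p.2 j • w j))
      ((gaussRn n t).prod (gaussRn n t)) :=
    .of_bound (by fun_prop : Continuous _).aestronglyMeasurable B (.of_forall fun _ ↦ hB _)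
  rw [integral_prod _ hint, add_comm]
  exact norm_integral_sub_le_of_norm_sub_le hint.integral_prod_left
    (.of_bound (by fun_prop : Continuous _).aestronglyMeasurable B (.of_forall fun _ ↦ hB _))
    (fun y ↦ norm_integral_gaussRn_sub_le hΦ hB hw ht n (P + ∑ j : Fin n, y j • v j))
    (norm_integral_gaussRn_sub_le hΦ hB hv ht n P)

end HeatError

theorem partial_heat_approx_general
    {H : Type*} [NormedAddCommGroup H] [InnerProductSpace ℝ H]
    (e : HilbertBasis ℕ ℝ H)
    (M : ℝ) (hM : 0 ≤ M) (ε : ℕ → ℝ) (hε : ∀ j, 0 ≤ ε j)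
    (F : H × H → ℂ)
    (D : (ℕ →₀ ℕ) → (ℕ →₀ ℕ) → (H × H → ℂ))
    (hD0 : D 0 0 = F)
    (hcont : ∀ α β : ℕ →₀ ℕ, (∀ j, α j ≤ 2) → (∀ j, β j ≤ 2) → Continuous (D α β))
    (hbound : ∀ α β : ℕ →₀ ℕ, (∀ j, α j ≤ 2) → (∀ j, β j ≤ 2) → ∀ P : H × H,
      ‖D α β P‖ ≤ M * (α + β).prod fun j k => ε j ^ k)
    (hstepx : ∀ α β : ℕ →₀ ℕ, (∀ j, α j ≤ 2) → (∀ j, β j ≤ 2) → ∀ j : ℕ, α j < 2 →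
      ∀ P : H × H, HasLineDerivAt ℝ (D α β) (D (α + Finsupp.single j 1) β P) P ((e j : H), 0))
    (hstepξ : ∀ α β : ℕ →₀ ℕ, (∀ j, α j ≤ 2) → (∀ j, β j ≤ 2) → ∀ j : ℕ, β j < 2 →
      ∀ P : H × H, HasLineDerivAt ℝ (D α β) (D α (β + Finsupp.single j 1) P) P (0, (e j : H)))
    (m : ℕ) (t : ℝ) (ht0 : 0 < t) (x ξ : H) :
    ‖(∫ p : (Fin m → ℝ) × (Fin m → ℝ),
          F (x + ∑ j : Fin m, p.1 j • (e (j : ℕ) : H),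
             ξ + ∑ j : Fin m, p.2 j • (e (j : ℕ) : H))
        ∂((gaussRn m t).prod (gaussRn m t)))
      - F (x, ξ)‖
    ≤ 2 * M * t * (∑ j ∈ Finset.range m, (ε j) ^ 2) + 4 * M * ∑' j : ℕ, ε (m + j) := by
  have h0 : ∀ i, (0 : ℕ →₀ ℕ) i ≤ 2 := fun _ ↦ Nat.zero_le _
  have hsingle : ∀ (j : ℕ) {k : ℕ}, k ≤ 2 → ∀ i, Finsupp.single j k i ≤ 2 := fun j k hk i ↦ by
    rw [Finsupp.single_apply]; split_ifs <;> omega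
  have hFM : ∀ P, ‖F P‖ ≤ M := fun P ↦ by simpa [hD0] using hbound 0 0 h0 h0 P
  have hx : ∀ j, SecondLineDerivBoundedBy F ((e j : H), 0) (M * ε j ^ 2) := fun j ↦
    ⟨D (Finsupp.single j 1) 0, D (Finsupp.single j 2) 0,
      fun P ↦ by simpa [hD0] using hstepx 0 0 h0 h0 j (by simp) P,
      fun P ↦ by
        simpa [← Finsupp.single_add] using hstepx _ 0 (hsingle j one_le_two) h0 j (by simp) P,
      fun P ↦ by simpa [Finsupp.prod_single_index] using hbound _ 0 (hsingle j le_rfl) h0 P⟩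
  have hξ : ∀ j, SecondLineDerivBoundedBy F (0, (e j : H)) (M * ε j ^ 2) := fun j ↦
    ⟨D 0 (Finsupp.single j 1), D 0 (Finsupp.single j 2),
      fun P ↦ by simpa [hD0] using hstepξ 0 0 h0 h0 j (by simp) P,
      fun P ↦ by
        simpa [← Finsupp.single_add] using hstepξ 0 _ h0 (hsingle j one_le_two) j (by simp) P,
      fun P ↦ by simpa [Finsupp.prod_single_index] using hbound 0 _ h0 (hsingle j le_rfl) P⟩
  have hpair : ∀ p : (Fin m → ℝ) × (Fin m → ℝ),
      (x + ∑ j : Fin m, p.1 j • (e (j : ℕ) : H), ξ + ∑ j : Fin m, p.2 j • (e (j : ℕ) : H))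
        = (x, ξ) + ∑ j : Fin m, p.1 j • ((e j : H), (0 : H))
            + ∑ j : Fin m, p.2 j • (0, (e j : H)) :=
    fun p ↦ by ext <;> simp [Prod.fst_sum, Prod.snd_sum]
  have htail : 0 ≤ ∑' j : ℕ, ε (m + j) := tsum_nonneg fun j ↦ hε _
  calc _ ≤ t * ∑ j ∈ Finset.range m, M * ε j ^ 2 + t * ∑ j ∈ Finset.range m, M * ε j ^ 2 := by
        simp_rw [hpair]
        exact norm_integral_gaussRn_prod_sub_le (hD0 ▸ hcont 0 0 h0 h0) hFM hx hξ ht0.le m (x, ξ)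
    _ = 2 * M * t * ∑ j ∈ Finset.range m, ε j ^ 2 := by rw [← Finset.mul_sum]; ring
    _ ≤ _ := le_add_of_nonneg_right (by positivity)

/-- Quantitative form of Proposition 2.3: for a symbol `F` of class
`S₂(M,ε)` (encoded by the family `D α β` of its iterated line derivatives along the
orthonormal basis directions, for multi-indices `α, β` with entries `≤ 2`), the partial
heat operator acting on the first `m` coordinates satisfies
`|(H_{m,t}F)(x,ξ) − F(x,ξ)| ≤ 2 M t Σ_{j<m} ε_j² + 4 M Σ_{j≥m} ε_j` for `0 < t < 1`. -/
theorem partial_heat_approx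
    {H : Type*} [NormedAddCommGroup H] [InnerProductSpace ℝ H] [CompleteSpace H]
    (e : HilbertBasis ℕ ℝ H)
    (M : ℝ) (hM : 0 ≤ M) (ε : ℕ → ℝ) (hε : ∀ j, 0 ≤ ε j) (hsum : Summable ε)
    (F : H × H → ℂ)
    (D : (ℕ →₀ ℕ) → (ℕ →₀ ℕ) → (H × H → ℂ))
    (hD0 : D 0 0 = F)
    (hcont : ∀ α β : ℕ →₀ ℕ, (∀ j, α j ≤ 2) → (∀ j, β j ≤ 2) → Continuous (D α β))
    (hbound : ∀ α β : ℕ →₀ ℕ, (∀ j, α j ≤ 2) → (∀ j, β j ≤ 2) → ∀ P : H × H,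
      ‖D α β P‖ ≤ M * (α + β).prod fun j k => ε j ^ k)
    (hstepx : ∀ α β : ℕ →₀ ℕ, (∀ j, α j ≤ 2) → (∀ j, β j ≤ 2) → ∀ j : ℕ, α j < 2 →
      ∀ P : H × H, HasLineDerivAt ℝ (D α β) (D (α + Finsupp.single j 1) β P) P ((e j : H), 0))
    (hstepξ : ∀ α β : ℕ →₀ ℕ, (∀ j, α j ≤ 2) → (∀ j, β j ≤ 2) → ∀ j : ℕ, β j < 2 →
      ∀ P : H × H, HasLineDerivAt ℝ (D α β) (D α (β + Finsupp.single j 1) P) P (0, (e j : H)))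
    (m : ℕ) (hm : 1 ≤ m) (t : ℝ) (ht0 : 0 < t) (ht1 : t < 1) (x ξ : H) :
    ‖(∫ p : (Fin m → ℝ) × (Fin m → ℝ),
          F (x + ∑ j : Fin m, p.1 j • (e (j : ℕ) : H),
             ξ + ∑ j : Fin m, p.2 j • (e (j : ℕ) : H))
        ∂((gaussRn m t).prod (gaussRn m t)))
      - F (x, ξ)‖
    ≤ 2 * M * t * (∑ j ∈ Finset.range m, (ε j) ^ 2) + 4 * M * ∑' j : ℕ, ε (m + j) :=
  partial_heat_approx_general e M hM ε hε F D hD0 hcont hbound hstepx hstepξ m t ht0 x ξ
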